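/- There exists a constant C > 0 such that for all real x ≥ 2, |∑_{n ≤ x} φ(⌊x/n⌋)/⌊x/n⌋ − κ·x| ≤ C·x^{1/2}, where κ = ∑_{n=1}^∞ φ(n)/(n²(n+1)); in particular this series converges. -/

import Mathlib

open Finset Real Filter

/-!
Grouping the `n ≤ x` by `k = ⌊x / n⌋` turns the sum into `∑_k (⌊x / k⌋ - ⌊x / (k + 1)⌋) φ(k) / k`,
and `⌊x / k⌋ - ⌊x / (k + 1)⌋ = x / (k (k + 1)) + O(1)`. The `O(1)` errors are affordable only for
`k ≤ K = ⌊√x⌋`: the `n` with `⌊x / n⌋ > K` are at most `x / (K + 1) ≤ √x` in number, and the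
tail `∑_{k > K} φ(k) / (k² (k + 1))` of `κ` is at most `1 / (K + 1)`.
-/

theorem Nat.le_floor_div_comm {x : ℝ} {n k : ℕ} (hn : n ≠ 0) (hk : k ≠ 0) :
    k ≤ ⌊x / n⌋₊ ↔ n ≤ ⌊x / k⌋₊ := by
  rw [Nat.le_floor_iff' hk, Nat.le_floor_iff' hn, le_div_iff₀ (by positivity),
    le_div_iff₀ (by positivity), mul_comm]

theorem Nat.floor_div_eq_iff {x : ℝ} {n k : ℕ} (hn : n ≠ 0) (hk : k ≠ 0) :
    ⌊x / n⌋₊ = k ↔ n ∈ Ioc ⌊x / (k + 1 : ℕ)⌋₊ ⌊x / k⌋₊ := by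
  rw [mem_Ioc, ← Nat.le_floor_div_comm hn hk, ← not_le,
    ← Nat.le_floor_div_comm hn k.succ_ne_zero]
  omega

theorem Nat.one_le_floor_div_iff {x : ℝ} {n : ℕ} (hn : n ≠ 0) : 1 ≤ ⌊x / n⌋₊ ↔ n ≤ ⌊x⌋₊ := by
  simpa using Nat.le_floor_div_comm (x := x) hn one_ne_zero

theorem sum_comp_floor_div_eq {M : Type*} [AddCommMonoid M] (f : ℕ → M) (x : ℝ) (K : ℕ) :
    ∑ n ∈ Icc 1 ⌊x⌋₊, f ⌊x / n⌋₊ =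
      ∑ n ∈ Icc 1 ⌊x⌋₊ with K < ⌊x / (n : ℕ)⌋₊, f ⌊x / n⌋₊ +
        ∑ k ∈ Icc 1 K, (⌊x / k⌋₊ - ⌊x / (k + 1 : ℕ)⌋₊) • f k := by
  rw [← sum_filter_add_sum_filter_not _ (fun n : ℕ => K < ⌊x / n⌋₊) (fun n : ℕ => f ⌊x / n⌋₊)]
  congr 1
  have hmaps : ∀ n ∈ {n ∈ Icc 1 ⌊x⌋₊ | ¬K < ⌊x / (n : ℕ)⌋₊}, ⌊x / n⌋₊ ∈ Icc 1 K := by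
    intro n hn
    simp only [mem_filter, mem_Icc, not_lt] at hn ⊢
    exact ⟨(Nat.one_le_floor_div_iff (by omega)).2 hn.1.2, hn.2⟩
  rw [← sum_fiberwise_of_maps_to hmaps]
  refine sum_congr rfl fun k hk => ?_
  obtain ⟨hk1, hkK⟩ := mem_Icc.1 hk
  have hfiber : {n ∈ {n ∈ Icc 1 ⌊x⌋₊ | ¬K < ⌊x / (n : ℕ)⌋₊} | ⌊x / (n : ℕ)⌋₊ = k} =
      Ioc ⌊x / (k + 1 : ℕ)⌋₊ ⌊x / k⌋₊ := by
    ext n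
    simp only [mem_filter, mem_Icc, not_lt]
    constructor
    · rintro ⟨⟨⟨hn, -⟩, -⟩, hnk⟩
      exact (Nat.floor_div_eq_iff (by omega) (by omega)).1 hnk
    · intro hn
      have hn0 : n ≠ 0 := by rw [mem_Ioc] at hn; omega
      have hnk := (Nat.floor_div_eq_iff hn0 (by omega)).2 hn
      have hnx := (Nat.one_le_floor_div_iff hn0).1 (hnk ▸ hk1)
      exact ⟨⟨⟨by omega, hnx⟩, by omega⟩, hnk⟩
  rw [sum_congr rfl fun n hn => by rw [(mem_filter.1 hn).2], sum_const, hfiber, Nat.card_Ioc]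

theorem card_filter_lt_floor_div_le {x : ℝ} (hx : 0 ≤ x) (K : ℕ) :
    (#{n ∈ Icc 1 ⌊x⌋₊ | K < ⌊x / (n : ℕ)⌋₊} : ℝ) ≤ x / (K + 1) := by
  have hsub : {n ∈ Icc 1 ⌊x⌋₊ | K < ⌊x / (n : ℕ)⌋₊} ⊆ Icc 1 ⌊x / (K + 1 : ℕ)⌋₊ := by
    intro n hn
    simp only [mem_filter, mem_Icc] at hn ⊢
    exact ⟨hn.1.1, (Nat.le_floor_div_comm (by omega) K.succ_ne_zero).1 hn.2⟩
  calc (#{n ∈ Icc 1 ⌊x⌋₊ | K < ⌊x / (n : ℕ)⌋₊} : ℝ) ≤ ⌊x / (K + 1 : ℕ)⌋₊ := by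
        exact_mod_cast (card_le_card hsub).trans (by simp)
    _ ≤ x / (K + 1) := by exact_mod_cast Nat.floor_le (by positivity)

theorem abs_sum_le_card {ι : Type*} (s : Finset ι) {g : ι → ℝ} (hg : ∀ i ∈ s, |g i| ≤ 1) :
    |∑ i ∈ s, g i| ≤ #s :=
  (abs_sum_le_sum_abs _ _).trans (by simpa using sum_le_card_nsmul s _ 1 hg)

theorem abs_natFloor_sub_natFloor_sub_sub_le_one {a b : ℝ} (hb : 0 ≤ b) (hba : b ≤ a) :
    |((⌊a⌋₊ - ⌊b⌋₊ : ℕ) : ℝ) - (a - b)| ≤ 1 := by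
  rw [Nat.cast_sub (Nat.floor_le_floor hba), abs_le]
  constructor <;> linarith [Nat.floor_le hb, Nat.floor_le (hb.trans hba),
    Nat.lt_floor_add_one a, Nat.lt_floor_add_one b]

theorem hasSum_inv_add_one_mul_add_two {a : ℝ} (ha : 0 ≤ a) :
    HasSum (fun n : ℕ => ((n + a + 1) * (n + a + 2))⁻¹) (a + 1)⁻¹ := by
  have htel (n : ℕ) :
      ((n + a + 1) * (n + a + 2))⁻¹ = (n + a + 1)⁻¹ - ((n + 1 : ℕ) + a + 1)⁻¹ := by
    push_cast
    field_simp
    ring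
  rw [hasSum_iff_tendsto_nat_of_nonneg (fun n => by positivity)]
  simp only [htel, sum_range_sub', Nat.cast_zero, zero_add]
  have hlim : Tendsto (fun n : ℕ => ((n : ℝ) + a + 1)⁻¹) atTop (nhds 0) :=
    (tendsto_atTop_add_const_right _ 1 (tendsto_atTop_add_const_right _ a
      tendsto_natCast_atTop_atTop)).inv_tendsto_atTop
  simpa using hlim.const_sub (a + 1)⁻¹

/-- `∑' n, kappaTerm f n = ∑_{k ≥ 1} f k / (k (k + 1))`, where `1 / (k (k + 1))` is the density
of the `n` with `⌊x / n⌋ = k`. -/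
noncomputable def kappaTerm (f : ℕ → ℝ) (n : ℕ) : ℝ := f (n + 1) / ((n + 1) * (n + 2))

section kappaTerm

variable {f : ℕ → ℝ}

theorem abs_kappaTerm_le (hf : ∀ k, |f k| ≤ 1) (n : ℕ) :
    |kappaTerm f n| ≤ ((n + 1 : ℝ) * (n + 2))⁻¹ := by
  rw [kappaTerm, abs_div, abs_of_pos (by positivity : (0 : ℝ) < (n + 1) * (n + 2)), div_eq_mul_inv]
  exact mul_le_of_le_one_left (by positivity) (hf _)

theorem summable_kappaTerm (hf : ∀ k, |f k| ≤ 1) : Summable (kappaTerm f) := by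
  refine .of_norm_bounded (hasSum_inv_add_one_mul_add_two le_rfl).summable fun n => ?_
  simpa using abs_kappaTerm_le hf n

theorem abs_tsum_kappaTerm_nat_add_le (hf : ∀ k, |f k| ≤ 1) (K : ℕ) :
    |∑' n, kappaTerm f (n + K)| ≤ (K + 1 : ℝ)⁻¹ :=
  tsum_of_norm_bounded (f := fun n => kappaTerm f (n + K))
    (hasSum_inv_add_one_mul_add_two K.cast_nonneg) fun n => by
      simpa [add_assoc] using abs_kappaTerm_le hf (n + K)

theorem abs_sum_floor_div_smul_sub_mul_sum_kappaTerm_le (hf : ∀ k, |f k| ≤ 1) {x : ℝ}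
    (hx : 0 ≤ x) (K : ℕ) :
    |∑ k ∈ Icc 1 K, (⌊x / k⌋₊ - ⌊x / (k + 1 : ℕ)⌋₊) • f k -
        x * ∑ k ∈ range K, kappaTerm f k| ≤ K := by
  have hpartial : x * ∑ k ∈ range K, kappaTerm f k =
      ∑ k ∈ Icc 1 K, f k * (x / k - x / (k + 1 : ℕ)) := by
    rw [← Ico_add_one_right_eq_Icc, sum_Ico_eq_sum_range, add_tsub_cancel_right, mul_sum]
    refine sum_congr rfl fun k _ => ?_
    rw [kappaTerm, add_comm 1 k]
    push_cast
    field_simp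
    ring
  rw [hpartial, ← sum_sub_distrib]
  calc _ ≤ (#(Icc 1 K) : ℝ) := abs_sum_le_card _ fun k hk => ?_
    _ = K := by simp
  have hk : (0 : ℝ) < k := by have := (mem_Icc.1 hk).1; positivity
  rw [nsmul_eq_mul, mul_comm _ (f k), ← mul_sub, abs_mul]
  exact mul_le_one₀ (hf k) (abs_nonneg _) (abs_natFloor_sub_natFloor_sub_sub_le_one
    (by positivity) (div_le_div_of_nonneg_left hx hk (by push_cast; linarith)))

theorem abs_sum_comp_floor_div_sub_tsum_kappaTerm_mul_le (hf : ∀ k, |f k| ≤ 1) {x : ℝ}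
    (hx : 0 ≤ x) :
    |∑ n ∈ Icc 1 ⌊x⌋₊, f ⌊x / n⌋₊ - (∑' n, kappaTerm f n) * x| ≤ 3 * √x := by
  set K := ⌊√x⌋₊
  have hK : (K : ℝ) ≤ √x := Nat.floor_le (sqrt_nonneg x)
  have hxK : x / (K + 1) ≤ √x := by
    rw [div_le_iff₀ (by positivity)]
    nlinarith [Nat.lt_floor_add_one √x, sq_sqrt hx, sqrt_nonneg x]
  have hlarge : |∑ n ∈ Icc 1 ⌊x⌋₊ with K < ⌊x / (n : ℕ)⌋₊, f ⌊x / n⌋₊| ≤ x / (K + 1) :=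
    (abs_sum_le_card _ fun n _ => hf _).trans (card_filter_lt_floor_div_le hx K)
  have hsmall := abs_sum_floor_div_smul_sub_mul_sum_kappaTerm_le hf hx K
  have htail : |x * ∑' n, kappaTerm f (n + K)| ≤ x / (K + 1) := by
    rw [abs_mul, abs_of_nonneg hx, div_eq_mul_inv]
    exact mul_le_mul_of_nonneg_left (abs_tsum_kappaTerm_nat_add_le hf K) hx
  rw [sum_comp_floor_div_eq f x K, ← (summable_kappaTerm hf).sum_add_tsum_nat_add K]
  calc _ = |∑ n ∈ Icc 1 ⌊x⌋₊ with K < ⌊x / (n : ℕ)⌋₊, f ⌊x / n⌋₊ +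
          (∑ k ∈ Icc 1 K, (⌊x / k⌋₊ - ⌊x / (k + 1 : ℕ)⌋₊) • f k -
            x * ∑ k ∈ range K, kappaTerm f k) - x * ∑' n, kappaTerm f (n + K)| := by
          congr 1
          ring
    _ ≤ x / (K + 1) + K + x / (K + 1) := by
      refine (abs_sub _ _).trans (add_le_add ((abs_add_le _ _).trans ?_) htail)
      exact add_le_add hlarge hsmall
    _ ≤ 3 * √x := by linarith

end kappaTerm

theorem sum_totient_floor_div_over_floor :
    Summable (fun n : ℕ =>
      (Nat.totient (n + 1) : ℝ) / (((n : ℝ) + 1) ^ 2 * ((n : ℝ) + 2))) ∧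
    ∃ C : ℝ, 0 < C ∧ ∀ x : ℝ, 2 ≤ x →
      |(∑ n ∈ Finset.Icc 1 ⌊x⌋₊,
          (Nat.totient ⌊x / (n : ℝ)⌋₊ : ℝ) / (⌊x / (n : ℝ)⌋₊ : ℝ)) -
        (∑' n : ℕ, (Nat.totient (n + 1) : ℝ) / (((n : ℝ) + 1) ^ 2 * ((n : ℝ) + 2))) * x| ≤
        C * Real.sqrt x := by
  have hf (k : ℕ) : |(Nat.totient k : ℝ) / k| ≤ 1 := by
    rw [abs_of_nonneg (by positivity)]
    exact div_le_one_of_le₀ (by exact_mod_cast Nat.totient_le k) k.cast_nonneg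
  have hterm : (fun n : ℕ => (Nat.totient (n + 1) : ℝ) / (((n : ℝ) + 1) ^ 2 * ((n : ℝ) + 2))) =
      kappaTerm fun k => (Nat.totient k : ℝ) / k := by
    funext n
    rw [kappaTerm, div_div]
    push_cast
    ring
  rw [hterm]
  exact ⟨summable_kappaTerm hf, 3, by norm_num,
    fun x hx => abs_sum_comp_floor_div_sub_tsum_kappaTerm_mul_le hf (by linarith)⟩
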